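/- arXiv:0902.2135 — 2 statements merged into one kernel-verified Lean document; each statement's English description precedes it below -/
import Mathlib

section
/- Let θ₁, θ₂, θ₃ be a basis of the self-dual 2-forms on an oriented 4-dimensional real inner product space, and let A₁, A₂, A₃ be vectors such that ι_{A_i}θ_j = ι_{A_j}θ_i for all i, j. Then A₁ = A₂ = A₃ = 0. -/
noncomputable def stdBasis4 (i : Fin 4) : Fin 4 → ℝ := Pi.single i 1

/-- Self-duality `*ω = ω` of a 2-form on oriented Euclidean ℝ⁴, expressed in the
standard orthonormal oriented basis. -/
def IsSelfDual (ω : (Fin 4 → ℝ) [⋀^Fin 2]→ₗ[ℝ] ℝ) : Prop :=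
  ω ![stdBasis4 0, stdBasis4 1] = ω ![stdBasis4 2, stdBasis4 3] ∧
  ω ![stdBasis4 0, stdBasis4 2] = ω ![stdBasis4 3, stdBasis4 1] ∧
  ω ![stdBasis4 0, stdBasis4 3] = ω ![stdBasis4 1, stdBasis4 2]

/-!
Identify `ℝ⁴` with `ℍ`. A self-dual 2-form `ω` with `ω(e₀,e₁), ω(e₀,e₂), ω(e₀,e₃) = x` is
`ω(a, v) = ⟪u a, v⟫` for the imaginary quaternion `u = x₀ i + x₁ j + x₂ k`, so the hypothesis says
`u_j a_i = u_i a_j` for the quaternions `u_i` of `θ_i` and `a_i` of `A_i`. Then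
`(u₁ u₀ u₂ - u₂ u₀ u₁) a₀ = u₁ u₀² a₂ - u₂ u₀² a₁ = u₀² (u₁ a₂ - u₂ a₁) = 0`, using that `u₀²` is
real, while `u₁ u₀ u₂ - u₂ u₀ u₁ = 2 det (x₀, x₁, x₂)`, which is nonzero by linear independence.
Permuting the indices gives the other `a_i`.
-/

open Matrix Quaternion
open scoped InnerProductSpace

theorem MultilinearMap.apply_fin_two_eq_sum {R ι M : Type*} [CommSemiring R] [AddCommMonoid M]
    [Module R M] [Fintype ι] [DecidableEq ι]
    (f : MultilinearMap R (fun _ : Fin 2 => ι → R) M) (v w : ι → R) :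
    f ![v, w] = ∑ i, ∑ j, (v i * w j) • f ![Pi.single i 1, Pi.single j 1] := by
  have hx : ![v, w] = fun k => ∑ j, ![v, w] k j • Pi.single j (1 : R) := by
    funext k; exact pi_eq_sum_univ' _
  rw [hx, f.map_sum, ← (finTwoArrowEquiv ι).symm.sum_comp, Fintype.sum_prod_type]
  refine Finset.sum_congr rfl fun i _ => Finset.sum_congr rfl fun j _ => ?_
  rw [f.map_smul_univ, Fin.prod_univ_two]
  congr 2
  funext k; fin_cases k <;> rfl

theorem AlternatingMap.map_vecCons_swap {R M N : Type*} [Semiring R] [AddCommMonoid M]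
    [Module R M] [AddCommGroup N] [Module R N] (f : M [⋀^Fin 2]→ₗ[R] N) (v w : M) :
    f ![w, v] = -f ![v, w] := by
  rw [← f.map_swap ![v, w] (i := 0) (j := 1) (by decide)]
  congr 1
  funext k; fin_cases k <;> rfl

@[simps]
def imQuaternion {R : Type*} [Zero R] [One R] [Neg R] (x : Fin 3 → R) : ℍ[R] := ⟨0, x 0, x 1, x 2⟩

theorem imQuaternion_mul_self {R : Type*} [CommRing R] (x : Fin 3 → R) :
    imQuaternion x * imQuaternion x = ↑(-(x ⬝ᵥ x)) := by
  ext <;> simp [dotProduct, Fin.sum_univ_three, re_mul, imI_mul,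
    imJ_mul, imK_mul] <;> ring

theorem imQuaternion_mul_mul_sub_mul_mul {R : Type*} [CommRing R] (x y z : Fin 3 → R) :
    imQuaternion y * imQuaternion x * imQuaternion z -
      imQuaternion z * imQuaternion x * imQuaternion y = ↑(2 * (x ⬝ᵥ y ⨯₃ z)) := by
  ext <;> simp [cross_apply, dotProduct, Fin.sum_univ_three, re_mul, imI_mul,
    imJ_mul, imK_mul] <;> ring

theorem eq_zero_of_imQuaternion_mul_symm {R : Type*} [Field R] [NeZero (2 : R)]
    {x : Fin 3 → Fin 3 → R} (hx : det (of x) ≠ 0) {a : Fin 3 → ℍ[R]}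
    (h : ∀ i j, imQuaternion (x j) * a i = imQuaternion (x i) * a j) (i : Fin 3) : a i = 0 := by
  wlog hi : i = 0 generalizing x a i
  · refine this (x := x ∘ Equiv.swap 0 i) (a := a ∘ Equiv.swap 0 i) ?_ (fun _ _ => h _ _) 0 rfl
    rw [show of (x ∘ Equiv.swap 0 i) = (of x).submatrix (Equiv.swap 0 i) id from rfl, det_permute]
    refine mul_ne_zero ?_ hx
    rcases Int.units_eq_one_or (Equiv.Perm.sign (Equiv.swap (0 : Fin 3) i)) with hs | hs <;>
      simp [hs]
  subst hi
  have hx' : of x = ![x 0, x 1, x 2] := by ext i j; fin_cases i <;> rfl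
  set u := fun i => imQuaternion (x i)
  have hscalar : (↑(2 * det (of x)) : ℍ[R]) * a 0 = 0 :=
    calc (↑(2 * det (of x)) : ℍ[R]) * a 0
        = u 1 * u 0 * (u 2 * a 0) - u 2 * u 0 * (u 1 * a 0) := by
          rw [hx', ← triple_product_eq_det, ← imQuaternion_mul_mul_sub_mul_mul, sub_mul, mul_assoc,
            mul_assoc (u 2 * u 0)]
      _ = u 1 * (u 0 * u 0) * a 2 - u 2 * (u 0 * u 0) * a 1 := by
          simp only [u, h 0 2, h 0 1, mul_assoc]
      _ = (u 0 * u 0) * (u 1 * a 2 - u 2 * a 1) := by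
          simp only [u, imQuaternion_mul_self, ← coe_commutes, mul_sub, mul_assoc]
      _ = 0 := by rw [h 2 1, sub_self, mul_zero]
  rwa [coe_mul_eq_smul, smul_eq_zero, or_iff_right (mul_ne_zero two_ne_zero hx)] at hscalar

noncomputable def toQuaternion : (Fin 4 → ℝ) ≃ₗ[ℝ] ℍ :=
  (QuaternionAlgebra.linearEquivTuple _ _ _).symm

@[simp] theorem toQuaternion_re (a : Fin 4 → ℝ) : (toQuaternion a).re = a 0 := rfl
@[simp] theorem toQuaternion_imI (a : Fin 4 → ℝ) : (toQuaternion a).imI = a 1 := rfl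
@[simp] theorem toQuaternion_imJ (a : Fin 4 → ℝ) : (toQuaternion a).imJ = a 2 := rfl
@[simp] theorem toQuaternion_imK (a : Fin 4 → ℝ) : (toQuaternion a).imK = a 3 := rfl

noncomputable def selfDualCoords : ((Fin 4 → ℝ) [⋀^Fin 2]→ₗ[ℝ] ℝ) →ₗ[ℝ] (Fin 3 → ℝ) where
  toFun ω := ![ω ![stdBasis4 0, stdBasis4 1], ω ![stdBasis4 0, stdBasis4 2],
    ω ![stdBasis4 0, stdBasis4 3]]
  map_add' _ _ := by ext k; fin_cases k <;> rfl
  map_smul' _ _ := by ext k; fin_cases k <;> rfl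

def selfDualForms : Submodule ℝ ((Fin 4 → ℝ) [⋀^Fin 2]→ₗ[ℝ] ℝ) where
  carrier := {ω | IsSelfDual ω}
  add_mem' := fun ⟨h₁, h₂, h₃⟩ ⟨k₁, k₂, k₃⟩ =>
    ⟨congrArg₂ (· + ·) h₁ k₁, congrArg₂ (· + ·) h₂ k₂, congrArg₂ (· + ·) h₃ k₃⟩
  zero_mem' := ⟨rfl, rfl, rfl⟩
  smul_mem' c _ := fun ⟨h₁, h₂, h₃⟩ =>
    ⟨congrArg (c * ·) h₁, congrArg (c * ·) h₂, congrArg (c * ·) h₃⟩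

theorem IsSelfDual.apply_stdBasis4 {ω : (Fin 4 → ℝ) [⋀^Fin 2]→ₗ[ℝ] ℝ} (hω : IsSelfDual ω)
    (m l : Fin 4) :
    ω ![stdBasis4 m, stdBasis4 l] =
      let x := selfDualCoords ω
      !![0, x 0, x 1, x 2; -x 0, 0, x 2, -x 1; -x 1, -x 2, 0, x 0; -x 2, x 1, -x 0, 0] m l := by
  obtain ⟨h₁, h₂, h₃⟩ := hω
  have hdiag : ∀ v, ω ![v, v] = 0 := fun _ =>
    ω.map_eq_zero_of_eq _ (i := 0) (j := 1) rfl (by decide)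
  -- swaps given one pair at a time: the general `map_vecCons_swap` would make `simp` loop
  fin_cases m <;> fin_cases l <;>
    simp [selfDualCoords, ← h₁, ← h₂, ← h₃, hdiag,
      ω.map_vecCons_swap (stdBasis4 0) (stdBasis4 1),
      ω.map_vecCons_swap (stdBasis4 0) (stdBasis4 2),
      ω.map_vecCons_swap (stdBasis4 0) (stdBasis4 3),
      ω.map_vecCons_swap (stdBasis4 2) (stdBasis4 3),
      ω.map_vecCons_swap (stdBasis4 3) (stdBasis4 1),
      ω.map_vecCons_swap (stdBasis4 1) (stdBasis4 2)]

theorem IsSelfDual.apply_eq_inner {ω : (Fin 4 → ℝ) [⋀^Fin 2]→ₗ[ℝ] ℝ} (hω : IsSelfDual ω)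
    (a v : Fin 4 → ℝ) :
    ω ![a, v] = ⟪imQuaternion (selfDualCoords ω) * toQuaternion a, toQuaternion v⟫_ℝ := by
  have h := ω.toMultilinearMap.apply_fin_two_eq_sum a v
  simp only [AlternatingMap.coe_multilinearMap] at h
  simp only [h, show ∀ i, (Pi.single i 1 : Fin 4 → ℝ) = stdBasis4 i from fun _ => rfl,
    hω.apply_stdBasis4]
  simp [Fin.sum_univ_four, inner_def, re_mul]
  ring

theorem disjoint_selfDualForms_ker_selfDualCoords :
    Disjoint selfDualForms (LinearMap.ker selfDualCoords) := by
  refine Submodule.disjoint_def.2 fun ω hω hker => ?_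
  have h0 : imQuaternion (selfDualCoords ω) = 0 := by
    rw [LinearMap.mem_ker.1 hker]; ext <;> rfl
  ext x
  rw [show x = ![x 0, x 1] by ext i; fin_cases i <;> rfl, IsSelfDual.apply_eq_inner hω, h0]
  simp

theorem det_selfDualCoords_ne_zero {θ : Fin 3 → (Fin 4 → ℝ) [⋀^Fin 2]→ₗ[ℝ] ℝ}
    (hsd : ∀ i, IsSelfDual (θ i)) (hli : LinearIndependent ℝ θ) :
    det (of fun i => selfDualCoords (θ i)) ≠ 0 := by
  have hspan : Submodule.span ℝ (Set.range θ) ≤ selfDualForms :=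
    Submodule.span_le.2 (Set.range_subset_iff.2 hsd)
  rw [← isUnit_iff_ne_zero, ← isUnit_iff_isUnit_det, ← linearIndependent_rows_iff_isUnit]
  exact hli.map (disjoint_selfDualForms_ker_selfDualCoords.mono_left hspan)

/-- If θ₁, θ₂, θ₃ is a basis of the self-dual 2-forms and A₁, A₂, A₃ are vectors
with `ι_{A_i} θ_j = ι_{A_j} θ_i` for all i, j, then all the `A_i` vanish. -/
theorem selfDual_basis_contraction_symm
    (θ : Fin 3 → (Fin 4 → ℝ) [⋀^Fin 2]→ₗ[ℝ] ℝ)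
    (hsd : ∀ i, IsSelfDual (θ i))
    (hli : LinearIndependent ℝ θ)
    (A : Fin 3 → (Fin 4 → ℝ))
    (hsym : ∀ i j, ∀ v : Fin 4 → ℝ, θ j ![A i, v] = θ i ![A j, v]) :
    ∀ i, A i = 0 := by
  have hmul : ∀ i j, imQuaternion (selfDualCoords (θ j)) * toQuaternion (A i) =
      imQuaternion (selfDualCoords (θ i)) * toQuaternion (A j) := fun i j =>
    ext_inner_right ℝ fun w => by
      simpa [(hsd _).apply_eq_inner] using hsym i j (toQuaternion.symm w)
  intro i
  simpa using eq_zero_of_imQuaternion_mul_symm (det_selfDualCoords_ne_zero hsd hli) hmul i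
end

section
/- Let φ : (M,g) → (N,h) be a smooth map between (pseudo-)Riemannian manifolds and φ̂ : (CM, ĝ) → (CN, ĥ) its radial extension φ̂(x,r) = (φ(x), r) between the metric cones. Then the tension field components satisfy τ^γ(φ̂) = r^{−2} τ^γ(φ) for target directions γ along N, and τ^0(φ̂) = (1/r) g^{ij}(g_{ij} − h_{αβ} ∂_iφ^α ∂_jφ^β). Consequently, if φ is a Riemannian (isometric) immersion, then φ̂ is harmonic if and only if φ is harmonic; i.e., φ̂ is minimal iff φ is minimal. -/
/-- Christoffel symbols of a metric `g` (with given inverse `ginv`) on ℝᴺ. -/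
noncomputable def christoffel {N : ℕ}
    (g ginv : (Fin N → ℝ) → Matrix (Fin N) (Fin N) ℝ)
    (γ μ ν : Fin N) (x : Fin N → ℝ) : ℝ :=
  (1 / 2) * ∑ σ : Fin N, ginv x γ σ *
    (fderiv ℝ (fun y => g y ν σ) x (Pi.single μ 1)
      + fderiv ℝ (fun y => g y μ σ) x (Pi.single ν 1)
      - fderiv ℝ (fun y => g y μ ν) x (Pi.single σ 1))

/-- The tension field
`τ^γ(φ) = g^{ij}(∂²_{ij}φ^γ − Γ^k_{ij}(g)∂_kφ^γ + Γ^γ_{αβ}(h)∂_iφ^α∂_jφ^β)`. -/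
noncomputable def tension {m n : ℕ}
    (g ginv : (Fin m → ℝ) → Matrix (Fin m) (Fin m) ℝ)
    (h hinv : (Fin n → ℝ) → Matrix (Fin n) (Fin n) ℝ)
    (φ : (Fin m → ℝ) → (Fin n → ℝ)) (γ : Fin n) (x : Fin m → ℝ) : ℝ :=
  ∑ i : Fin m, ∑ j : Fin m, ginv x i j *
    (fderiv ℝ (fun y => fderiv ℝ (fun z => φ z γ) y (Pi.single j 1)) x
        (Pi.single i 1)
      - ∑ k : Fin m, christoffel g ginv k i j x *
          fderiv ℝ (fun z => φ z γ) x (Pi.single k 1)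
      + ∑ α : Fin n, ∑ β : Fin n, christoffel h hinv γ α β (φ x) *
          fderiv ℝ (fun z => φ z α) x (Pi.single i 1) *
          fderiv ℝ (fun z => φ z β) x (Pi.single j 1))

/-- projection onto the non-radial coordinates -/
def spatial {m : ℕ} (y : Fin (m + 1) → ℝ) : Fin m → ℝ := fun i => y i.succ

/-- The cone metric `ĝ = dr² + r²g` in coordinates `(x⁰ = r, x¹, …, xᵐ)`. -/
noncomputable def coneMetric {m : ℕ} (g : (Fin m → ℝ) → Matrix (Fin m) (Fin m) ℝ)
    (y : Fin (m + 1) → ℝ) : Matrix (Fin (m + 1)) (Fin (m + 1)) ℝ :=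
  fun i j =>
    if hi : i = 0 then (if j = 0 then 1 else 0)
    else if hj : j = 0 then 0
    else (y 0) ^ 2 * g (spatial y) (i.pred hi) (j.pred hj)

/-- The inverse cone metric. -/
noncomputable def coneMetricInv {m : ℕ}
    (ginv : (Fin m → ℝ) → Matrix (Fin m) (Fin m) ℝ)
    (y : Fin (m + 1) → ℝ) : Matrix (Fin (m + 1)) (Fin (m + 1)) ℝ :=
  fun i j =>
    if hi : i = 0 then (if j = 0 then 1 else 0)
    else if hj : j = 0 then 0
    else (y 0) ^ (-2 : ℤ) * ginv (spatial y) (i.pred hi) (j.pred hj)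

/-- The radial extension `φ̂(x,r) = (φ(x),r)` in cone coordinates. -/
noncomputable def radialExtension {m n : ℕ}
    (φ : (Fin m → ℝ) → (Fin n → ℝ)) (y : Fin (m + 1) → ℝ) : Fin (n + 1) → ℝ :=
  fun a => if ha : a = 0 then y 0 else φ (spatial y) (a.pred ha)

noncomputable def spatialCLM (m : ℕ) : (Fin (m+1) → ℝ) →L[ℝ] (Fin m → ℝ) :=
  ContinuousLinearMap.pi fun i => ContinuousLinearMap.proj i.succ

lemma spatialCLM_apply {m : ℕ} (y : Fin (m+1) → ℝ) : spatialCLM m y = spatial y := rfl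

lemma spatial_single_zero {m : ℕ} : spatial (Pi.single (0 : Fin (m+1)) (1:ℝ)) = 0 := by
  funext i
  simp [spatial, Pi.single_eq_of_ne (Fin.succ_ne_zero i)]

lemma spatial_single_succ {m : ℕ} (j : Fin m) :
    spatial (Pi.single (j.succ) (1:ℝ)) = Pi.single j 1 := by
  funext i
  simp [spatial, Pi.single_apply, Fin.succ_inj]

lemma hasFDerivAt_comp_spatial {m : ℕ} (f : (Fin m → ℝ) → ℝ) (y : Fin (m+1) → ℝ)
    (hf : DifferentiableAt ℝ f (spatial y)) :
    HasFDerivAt (fun z => f (spatial z))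
      ((fderiv ℝ f (spatial y)).comp (spatialCLM m)) y :=
  (hf.hasFDerivAt.comp y ((spatialCLM m).hasFDerivAt))

lemma fderiv_comp_spatial {m : ℕ} (f : (Fin m → ℝ) → ℝ) (y v : Fin (m+1) → ℝ)
    (hf : DifferentiableAt ℝ f (spatial y)) :
    fderiv ℝ (fun z => f (spatial z)) y v = fderiv ℝ f (spatial y) (spatial v) := by
  rw [(hasFDerivAt_comp_spatial f y hf).fderiv]; rfl

lemma diff_fderiv_apply {m : ℕ} (f : (Fin m → ℝ) → ℝ) (hf : ContDiff ℝ (⊤ : ℕ∞) f)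
    (v : Fin m → ℝ) : Differentiable ℝ (fun x => fderiv ℝ f x v) :=
  ((hf.fderiv_right (m := ((⊤ : ℕ∞) : WithTop ℕ∞)) (by exact_mod_cast le_top)).clm_apply contDiff_const).differentiable (by simp : ((⊤ : ℕ∞) : WithTop ℕ∞) ≠ 0)

lemma pi_single_zero_succ {m : ℕ} (k : Fin m) :
    (Pi.single (k.succ) 1 : Fin (m+1) → ℝ) 0 = 0 := by
  rw [Pi.single_eq_of_ne (Fin.succ_ne_zero k).symm]

lemma pi_single_zero_zero {m : ℕ} :
    (Pi.single 0 1 : Fin (m+1) → ℝ) 0 = 1 := by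
  rw [Pi.single_eq_same]

-- product rule test
lemma hasFDerivAt_sq_mul {m : ℕ} (f : (Fin m → ℝ) → ℝ) (y : Fin (m+1) → ℝ)
    (hf : DifferentiableAt ℝ f (spatial y)) (v : Fin (m+1) → ℝ) :
    fderiv ℝ (fun z => (z 0)^2 * f (spatial z)) y v
      = 2 * (y 0) * (v 0) * f (spatial y)
        + (y 0)^2 * fderiv ℝ f (spatial y) (spatial v) := by
  have h0 : HasFDerivAt (fun z : Fin (m+1) → ℝ => z 0)
      (ContinuousLinearMap.proj (0 : Fin (m+1)) : (Fin (m+1) → ℝ) →L[ℝ] ℝ) y :=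
    (ContinuousLinearMap.proj (0 : Fin (m+1)) : (Fin (m+1) → ℝ) →L[ℝ] ℝ).hasFDerivAt
  have h1 : HasFDerivAt (fun z : Fin (m+1) → ℝ => (z 0)^2)
      ((fun z : Fin (m+1) → ℝ => z 0) y • (ContinuousLinearMap.proj (0:Fin (m+1)) : (Fin (m+1) → ℝ) →L[ℝ] ℝ) +
        (fun z : Fin (m+1) → ℝ => z 0) y • (ContinuousLinearMap.proj (0:Fin (m+1)) : (Fin (m+1) → ℝ) →L[ℝ] ℝ)) y := by
    have := h0.fun_mul h0
    simpa [pow_two] using this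
  have h2 := hasFDerivAt_comp_spatial f y hf
  have h3 := h1.fun_mul h2
  rw [h3.fderiv]
  simp [spatialCLM_apply]
  ring

section ConeLemmas
variable {m : ℕ} (g : (Fin m → ℝ) → Matrix (Fin m) (Fin m) ℝ)

lemma coneMetric_succ_succ (y : Fin (m+1) → ℝ) (i j : Fin m) :
    coneMetric g y i.succ j.succ = (y 0)^2 * g (spatial y) i j := by
  simp [coneMetric, Fin.succ_ne_zero]

lemma coneMetricInv_zero_zero (y : Fin (m+1) → ℝ) : coneMetricInv g y 0 0 = 1 := by
  simp [coneMetricInv]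

lemma coneMetricInv_zero_succ (y : Fin (m+1) → ℝ) (j : Fin m) :
    coneMetricInv g y 0 j.succ = 0 := by
  simp [coneMetricInv, Fin.succ_ne_zero]

lemma coneMetricInv_succ_zero (y : Fin (m+1) → ℝ) (i : Fin m) :
    coneMetricInv g y i.succ 0 = 0 := by
  simp [coneMetricInv, Fin.succ_ne_zero]

lemma coneMetricInv_succ_succ (y : Fin (m+1) → ℝ) (i j : Fin m) :
    coneMetricInv g y i.succ j.succ = (y 0)^(-2:ℤ) * g (spatial y) i j := by
  simp [coneMetricInv, Fin.succ_ne_zero]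

lemma fderiv_coneMetric_left_zero (ν : Fin (m+1)) (y v : Fin (m+1) → ℝ) :
    fderiv ℝ (fun z => coneMetric g z 0 ν) y v = 0 := by
  have : (fun z : Fin (m+1) → ℝ => coneMetric g z 0 ν)
      = fun _ => (if ν = 0 then (1:ℝ) else 0) := by
    funext z; simp [coneMetric]
  rw [this, fderiv_fun_const]; simp

lemma fderiv_coneMetric_right_zero (μ : Fin (m+1)) (y v : Fin (m+1) → ℝ) :
    fderiv ℝ (fun z => coneMetric g z μ 0) y v = 0 := by
  have : (fun z : Fin (m+1) → ℝ => coneMetric g z μ 0)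
      = fun _ => (if μ = 0 then (1:ℝ) else 0) := by
    funext z
    by_cases hμ : μ = 0 <;> simp [coneMetric, hμ]
  rw [this, fderiv_fun_const]; simp

lemma fderiv_coneMetric_succ_succ
    (hg : ∀ i j, ContDiff ℝ (⊤ : ℕ∞) (fun x => g x i j)) (i j : Fin m)
    (y v : Fin (m+1) → ℝ) :
    fderiv ℝ (fun z => coneMetric g z i.succ j.succ) y v
      = 2 * (y 0) * (v 0) * g (spatial y) i j
        + (y 0)^2 * fderiv ℝ (fun x => g x i j) (spatial y) (spatial v) := by
  have : (fun z : Fin (m+1) → ℝ => coneMetric g z i.succ j.succ)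
      = fun z => (z 0)^2 * (fun x => g x i j) (spatial z) := by
    funext z; exact coneMetric_succ_succ g z i j
  rw [this]
  exact hasFDerivAt_sq_mul (fun x => g x i j) y
    ((hg i j).differentiable (by simp) _) v

end ConeLemmas



lemma zpow_neg_two_eq (r : ℝ) : r^(-2:ℤ) = (r^2)⁻¹ := by
  rw [zpow_neg, zpow_two, pow_two]

section ChristoffelCone
variable {m : ℕ} (g ginv : (Fin m → ℝ) → Matrix (Fin m) (Fin m) ℝ)

lemma fderiv_coneMetric_ss_dir0
    (hg : ∀ i j, ContDiff ℝ (⊤ : ℕ∞) (fun x => g x i j)) (i j : Fin m)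
    (y : Fin (m+1) → ℝ) :
    fderiv ℝ (fun z => coneMetric g z i.succ j.succ) y (Pi.single 0 1)
      = 2 * (y 0) * g (spatial y) i j := by
  rw [fderiv_coneMetric_succ_succ g hg i j y (Pi.single 0 1),
    spatial_single_zero, pi_single_zero_zero]
  simp

lemma fderiv_coneMetric_ss_dirsucc
    (hg : ∀ i j, ContDiff ℝ (⊤ : ℕ∞) (fun x => g x i j)) (i j k : Fin m)
    (y : Fin (m+1) → ℝ) :
    fderiv ℝ (fun z => coneMetric g z i.succ j.succ) y (Pi.single k.succ 1)
      = (y 0)^2 * fderiv ℝ (fun x => g x i j) (spatial y) (Pi.single k 1) := by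
  rw [fderiv_coneMetric_succ_succ g hg i j y (Pi.single k.succ 1),
    spatial_single_succ, pi_single_zero_succ]
  ring

lemma christoffelCone_000 (y : Fin (m+1) → ℝ) :
    christoffel (coneMetric g) (coneMetricInv ginv) 0 0 0 y = 0 := by
  unfold christoffel
  rw [Fin.sum_univ_succ]
  simp [coneMetricInv_zero_zero, coneMetricInv_zero_succ,
    fderiv_coneMetric_left_zero]

lemma christoffelCone_00s (y : Fin (m+1) → ℝ) (j : Fin m) :
    christoffel (coneMetric g) (coneMetricInv ginv) 0 0 j.succ y = 0 := by
  unfold christoffel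
  rw [Fin.sum_univ_succ]
  simp [coneMetricInv_zero_zero, coneMetricInv_zero_succ,
    fderiv_coneMetric_left_zero, fderiv_coneMetric_right_zero]

lemma christoffelCone_0s0 (y : Fin (m+1) → ℝ) (i : Fin m) :
    christoffel (coneMetric g) (coneMetricInv ginv) 0 i.succ 0 y = 0 := by
  unfold christoffel
  rw [Fin.sum_univ_succ]
  simp [coneMetricInv_zero_zero, coneMetricInv_zero_succ,
    fderiv_coneMetric_left_zero, fderiv_coneMetric_right_zero]

lemma christoffelCone_0ss (hg : ∀ i j, ContDiff ℝ (⊤ : ℕ∞) (fun x => g x i j))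
    (y : Fin (m+1) → ℝ) (i j : Fin m) :
    christoffel (coneMetric g) (coneMetricInv ginv) 0 i.succ j.succ y
      = -(y 0) * g (spatial y) i j := by
  unfold christoffel
  rw [Fin.sum_univ_succ]
  simp [coneMetricInv_zero_zero, coneMetricInv_zero_succ,
    fderiv_coneMetric_right_zero, fderiv_coneMetric_ss_dir0 g hg]
  ring

lemma christoffelCone_s00 (y : Fin (m+1) → ℝ) (c : Fin m) :
    christoffel (coneMetric g) (coneMetricInv ginv) c.succ 0 0 y = 0 := by
  unfold christoffel
  rw [Fin.sum_univ_succ]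
  simp [coneMetricInv_succ_zero, coneMetricInv_succ_succ,
    fderiv_coneMetric_left_zero]

lemma christoffelCone_s0s (hg : ∀ i j, ContDiff ℝ (⊤ : ℕ∞) (fun x => g x i j))
    (hgsym : ∀ x, (g x).IsSymm)
    (hginv : ∀ x, g x * ginv x = 1 ∧ ginv x * g x = 1)
    (y : Fin (m+1) → ℝ) (hy : y 0 ≠ 0) (c j : Fin m) :
    christoffel (coneMetric g) (coneMetricInv ginv) c.succ 0 j.succ y
      = (y 0)⁻¹ * (if c = j then 1 else 0) := by
  unfold christoffel
  rw [Fin.sum_univ_succ]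
  simp only [coneMetricInv_succ_zero, coneMetricInv_succ_succ, zero_mul,
    fderiv_coneMetric_left_zero, fderiv_coneMetric_ss_dir0 g hg,
    fderiv_coneMetric_right_zero, add_zero, sub_zero, zero_add]
  have hterm : ∀ s : Fin m, (y 0)^(-2:ℤ) * ginv (spatial y) c s *
      (2 * y 0 * g (spatial y) j s)
      = (y 0)⁻¹ * (2 * (ginv (spatial y) c s * g (spatial y) s j)) := by
    intro s
    rw [(hgsym (spatial y)).apply j s, zpow_neg_two_eq]
    field_simp
  rw [Finset.sum_congr rfl (fun s _ => hterm s), ← Finset.mul_sum,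
    ← Finset.mul_sum, ← Matrix.mul_apply, (hginv (spatial y)).2,
    Matrix.one_apply]
  ring

lemma christoffelCone_ss0 (hg : ∀ i j, ContDiff ℝ (⊤ : ℕ∞) (fun x => g x i j))
    (hgsym : ∀ x, (g x).IsSymm)
    (hginv : ∀ x, g x * ginv x = 1 ∧ ginv x * g x = 1)
    (y : Fin (m+1) → ℝ) (hy : y 0 ≠ 0) (c i : Fin m) :
    christoffel (coneMetric g) (coneMetricInv ginv) c.succ i.succ 0 y
      = (y 0)⁻¹ * (if c = i then 1 else 0) := by
  unfold christoffel
  rw [Fin.sum_univ_succ]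
  simp only [coneMetricInv_succ_zero, coneMetricInv_succ_succ, zero_mul,
    fderiv_coneMetric_left_zero, fderiv_coneMetric_ss_dir0 g hg,
    fderiv_coneMetric_right_zero, add_zero, sub_zero, zero_add]
  have hterm : ∀ s : Fin m, (y 0)^(-2:ℤ) * ginv (spatial y) c s *
      (2 * y 0 * g (spatial y) i s)
      = (y 0)⁻¹ * (2 * (ginv (spatial y) c s * g (spatial y) s i)) := by
    intro s
    rw [(hgsym (spatial y)).apply i s, zpow_neg_two_eq]
    field_simp
  rw [Finset.sum_congr rfl (fun s _ => hterm s), ← Finset.mul_sum,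
    ← Finset.mul_sum, ← Matrix.mul_apply, (hginv (spatial y)).2,
    Matrix.one_apply]
  ring

lemma christoffelCone_sss (hg : ∀ i j, ContDiff ℝ (⊤ : ℕ∞) (fun x => g x i j))
    (y : Fin (m+1) → ℝ) (hy : y 0 ≠ 0) (c i j : Fin m) :
    christoffel (coneMetric g) (coneMetricInv ginv) c.succ i.succ j.succ y
      = christoffel g ginv c i j (spatial y) := by
  unfold christoffel
  rw [Fin.sum_univ_succ]
  simp only [coneMetricInv_succ_zero, coneMetricInv_succ_succ, zero_mul,
    fderiv_coneMetric_ss_dirsucc g hg, fderiv_coneMetric_ss_dir0 g hg,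
    zero_add]
  congr 1
  refine Finset.sum_congr rfl (fun s _ => ?_)
  have h2 : (y 0)^(-2:ℤ) * (y 0)^2 = 1 := by
    rw [zpow_neg_two_eq]
    field_simp
  have : ∀ A B C : ℝ, (y 0)^(-2:ℤ) * ginv (spatial y) c s *
      ((y 0)^2 * A + (y 0)^2 * B - (y 0)^2 * C)
      = ((y 0)^(-2:ℤ) * (y 0)^2) * (ginv (spatial y) c s * (A + B - C)) := by
    intro A B C; ring
  rw [this, h2, one_mul]

end ChristoffelCone


section RadialExt
variable {m n : ℕ} (φ : (Fin m → ℝ) → (Fin n → ℝ))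

lemma radialExtension_zero (y : Fin (m+1) → ℝ) :
    radialExtension φ y 0 = y 0 := by simp [radialExtension]

lemma radialExtension_succ (y : Fin (m+1) → ℝ) (a : Fin n) :
    radialExtension φ y a.succ = φ (spatial y) a := by
  simp [radialExtension, Fin.succ_ne_zero]

lemma spatial_radialExtension (y : Fin (m+1) → ℝ) :
    spatial (radialExtension φ y) = φ (spatial y) := by
  funext a; exact radialExtension_succ φ y a

lemma re_fun_zero :
    (fun z : Fin (m+1) → ℝ => radialExtension φ z 0) = fun z => z 0 :=
  funext fun z => radialExtension_zero φ z

lemma re_fun_succ (a : Fin n) :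
    (fun z : Fin (m+1) → ℝ => radialExtension φ z a.succ)
      = fun z => φ (spatial z) a :=
  funext fun z => radialExtension_succ φ z a

lemma fderiv_re_zero (y v : Fin (m+1) → ℝ) :
    fderiv ℝ (fun z => radialExtension φ z 0) y v = v 0 := by
  rw [re_fun_zero]
  have h : HasFDerivAt (fun z : Fin (m+1) → ℝ => z 0)
      (ContinuousLinearMap.proj (0 : Fin (m+1)) : (Fin (m+1) → ℝ) →L[ℝ] ℝ) y :=
    (ContinuousLinearMap.proj (0 : Fin (m+1)) : (Fin (m+1) → ℝ) →L[ℝ] ℝ).hasFDerivAt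
  rw [h.fderiv]; rfl

lemma fderiv_re_succ (hφ : ∀ a, ContDiff ℝ (⊤ : ℕ∞) (fun x => φ x a)) (a : Fin n)
    (y v : Fin (m+1) → ℝ) :
    fderiv ℝ (fun z => radialExtension φ z a.succ) y v
      = fderiv ℝ (fun x => φ x a) (spatial y) (spatial v) := by
  rw [re_fun_succ]
  exact fderiv_comp_spatial _ y v ((hφ a).differentiable (by simp) _)

lemma fderiv_re_succ_dir0 (hφ : ∀ a, ContDiff ℝ (⊤ : ℕ∞) (fun x => φ x a)) (a : Fin n)
    (y : Fin (m+1) → ℝ) :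
    fderiv ℝ (fun z => radialExtension φ z a.succ) y (Pi.single 0 1) = 0 := by
  rw [fderiv_re_succ φ hφ a y _, spatial_single_zero]
  exact (fderiv ℝ (fun x => φ x a) (spatial y)).map_zero

lemma fderiv_re_succ_dirsucc (hφ : ∀ a, ContDiff ℝ (⊤ : ℕ∞) (fun x => φ x a))
    (a : Fin n) (j : Fin m) (y : Fin (m+1) → ℝ) :
    fderiv ℝ (fun z => radialExtension φ z a.succ) y (Pi.single j.succ 1)
      = fderiv ℝ (fun x => φ x a) (spatial y) (Pi.single j 1) := by
  rw [fderiv_re_succ φ hφ a y _, spatial_single_succ]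

end RadialExt


lemma fderiv_fderiv_spatial_dirsucc {m : ℕ} (f : (Fin m → ℝ) → ℝ)
    (hf : ContDiff ℝ (⊤ : ℕ∞) f) (j i : Fin m) (y : Fin (m+1) → ℝ) :
    fderiv ℝ (fun y' : Fin (m+1) → ℝ => fderiv ℝ f (spatial y') (Pi.single j 1))
      y (Pi.single i.succ 1)
      = fderiv ℝ (fun x => fderiv ℝ f x (Pi.single j 1)) (spatial y)
          (Pi.single i 1) := by
  rw [fderiv_comp_spatial (fun x => fderiv ℝ f x (Pi.single j 1)) y _
    ((diff_fderiv_apply f hf _) _), spatial_single_succ]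

lemma fderiv_fderiv_spatial_dir0 {m : ℕ} (f : (Fin m → ℝ) → ℝ)
    (hf : ContDiff ℝ (⊤ : ℕ∞) f) (j : Fin m) (y : Fin (m+1) → ℝ) :
    fderiv ℝ (fun y' : Fin (m+1) → ℝ => fderiv ℝ f (spatial y') (Pi.single j 1))
      y (Pi.single 0 1) = 0 := by
  rw [fderiv_comp_spatial (fun x => fderiv ℝ f x (Pi.single j 1)) y _
    ((diff_fderiv_apply f hf _) _), spatial_single_zero]
  exact (fderiv ℝ _ (spatial y)).map_zero

section Main
variable {m n : ℕ}
  (g ginv : (Fin m → ℝ) → Matrix (Fin m) (Fin m) ℝ)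
  (h hinv : (Fin n → ℝ) → Matrix (Fin n) (Fin n) ℝ)
  (φ : (Fin m → ℝ) → (Fin n → ℝ))

lemma tension_re_zero
    (hgsm : ∀ i j, ContDiff ℝ (⊤ : ℕ∞) (fun x => g x i j))
    (hhsm : ∀ α β, ContDiff ℝ (⊤ : ℕ∞) (fun x => h x α β))
    (hφsm : ∀ α, ContDiff ℝ (⊤ : ℕ∞) (fun x => φ x α))
    (hgsym : ∀ x, (g x).IsSymm) (hhsym : ∀ x, (h x).IsSymm)
    (hginv : ∀ x, g x * ginv x = 1 ∧ ginv x * g x = 1)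
    (hhinv : ∀ x, h x * hinv x = 1 ∧ hinv x * h x = 1)
    (y : Fin (m+1) → ℝ) (hy : 0 < y 0) :
    tension (coneMetric g) (coneMetricInv ginv) (coneMetric h) (coneMetricInv hinv)
      (radialExtension φ) 0 y
    = (1 / y 0) * ∑ i : Fin m, ∑ j : Fin m, ginv (spatial y) i j *
        (g (spatial y) i j - ∑ α : Fin n, ∑ β : Fin n, h (φ (spatial y)) α β *
          fderiv ℝ (fun z => φ z α) (spatial y) (Pi.single i 1) *
          fderiv ℝ (fun z => φ z β) (spatial y) (Pi.single j 1)) := by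
  have hy0 : y 0 ≠ 0 := ne_of_gt hy
  have hyre : radialExtension φ y 0 ≠ 0 := by
    rw [radialExtension_zero]; exact hy0
  unfold tension
  simp only [Fin.sum_univ_succ,
    coneMetricInv_zero_zero, coneMetricInv_zero_succ, coneMetricInv_succ_zero,
    coneMetricInv_succ_succ,
    christoffelCone_000 g ginv y, christoffelCone_00s g ginv y,
    christoffelCone_0s0 g ginv y,
    christoffelCone_0ss g ginv hgsm y, christoffelCone_s00 g ginv y,
    christoffelCone_s0s g ginv hgsm hgsym hginv y hy0,
    christoffelCone_ss0 g ginv hgsm hgsym hginv y hy0,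
    christoffelCone_sss g ginv hgsm y hy0,
    christoffelCone_000 h hinv (radialExtension φ y),
    christoffelCone_00s h hinv (radialExtension φ y),
    christoffelCone_0s0 h hinv (radialExtension φ y),
    christoffelCone_0ss h hinv hhsm (radialExtension φ y),
    christoffelCone_s00 h hinv (radialExtension φ y),
    christoffelCone_s0s h hinv hhsm hhsym hhinv (radialExtension φ y) hyre,
    christoffelCone_ss0 h hinv hhsm hhsym hhinv (radialExtension φ y) hyre,
    christoffelCone_sss h hinv hhsm (radialExtension φ y) hyre,
    fderiv_re_zero φ, fderiv_re_succ_dir0 φ hφsm, fderiv_re_succ_dirsucc φ hφsm,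
    fderiv_fderiv_spatial_dir0, fderiv_fderiv_spatial_dirsucc,
    spatial_radialExtension φ y, radialExtension_zero φ y,
    pi_single_zero_zero, pi_single_zero_succ, fderiv_fun_const, Pi.zero_apply,
    ContinuousLinearMap.zero_apply,
    mul_zero, zero_mul, mul_one, one_mul, add_zero, zero_add, sub_zero,
    zero_sub, neg_zero, neg_mul, Finset.sum_const_zero]
  rw [Finset.mul_sum]
  refine Finset.sum_congr rfl fun i _ => ?_
  rw [Finset.mul_sum]
  refine Finset.sum_congr rfl fun j _ => ?_
  have hsum : (∑ α : Fin n, ∑ β : Fin n,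
      -(y 0 * h (φ (spatial y)) α β *
        fderiv ℝ (fun x => φ x α) (spatial y) (Pi.single i 1) *
        fderiv ℝ (fun x => φ x β) (spatial y) (Pi.single j 1)))
      = -(y 0) * ∑ α : Fin n, ∑ β : Fin n, h (φ (spatial y)) α β *
          fderiv ℝ (fun x => φ x α) (spatial y) (Pi.single i 1) *
          fderiv ℝ (fun x => φ x β) (spatial y) (Pi.single j 1) := by
    rw [Finset.mul_sum]
    refine Finset.sum_congr rfl fun α _ => ?_
    rw [Finset.mul_sum]
    refine Finset.sum_congr rfl fun β _ => ?_
    ring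
  rw [hsum, zpow_neg_two_eq]
  field_simp
  ring

lemma tension_re_succ
    (hgsm : ∀ i j, ContDiff ℝ (⊤ : ℕ∞) (fun x => g x i j))
    (hhsm : ∀ α β, ContDiff ℝ (⊤ : ℕ∞) (fun x => h x α β))
    (hφsm : ∀ α, ContDiff ℝ (⊤ : ℕ∞) (fun x => φ x α))
    (hgsym : ∀ x, (g x).IsSymm) (hhsym : ∀ x, (h x).IsSymm)
    (hginv : ∀ x, g x * ginv x = 1 ∧ ginv x * g x = 1)
    (hhinv : ∀ x, h x * hinv x = 1 ∧ hinv x * h x = 1)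
    (y : Fin (m+1) → ℝ) (hy : 0 < y 0) (γ : Fin n) :
    tension (coneMetric g) (coneMetricInv ginv) (coneMetric h) (coneMetricInv hinv)
      (radialExtension φ) γ.succ y
    = (y 0) ^ (-2 : ℤ) * tension g ginv h hinv φ γ (spatial y) := by
  have hy0 : y 0 ≠ 0 := ne_of_gt hy
  have hyre : radialExtension φ y 0 ≠ 0 := by
    rw [radialExtension_zero]; exact hy0
  unfold tension
  simp only [Fin.sum_univ_succ,
    coneMetricInv_zero_zero, coneMetricInv_zero_succ, coneMetricInv_succ_zero,
    coneMetricInv_succ_succ,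
    christoffelCone_000 g ginv y, christoffelCone_00s g ginv y,
    christoffelCone_0s0 g ginv y,
    christoffelCone_0ss g ginv hgsm y, christoffelCone_s00 g ginv y,
    christoffelCone_s0s g ginv hgsm hgsym hginv y hy0,
    christoffelCone_ss0 g ginv hgsm hgsym hginv y hy0,
    christoffelCone_sss g ginv hgsm y hy0,
    christoffelCone_000 h hinv (radialExtension φ y),
    christoffelCone_00s h hinv (radialExtension φ y),
    christoffelCone_0s0 h hinv (radialExtension φ y),
    christoffelCone_0ss h hinv hhsm (radialExtension φ y),
    christoffelCone_s00 h hinv (radialExtension φ y),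
    christoffelCone_s0s h hinv hhsm hhsym hhinv (radialExtension φ y) hyre,
    christoffelCone_ss0 h hinv hhsm hhsym hhinv (radialExtension φ y) hyre,
    christoffelCone_sss h hinv hhsm (radialExtension φ y) hyre,
    fderiv_re_zero φ, fderiv_re_succ_dir0 φ hφsm, fderiv_re_succ_dirsucc φ hφsm,
    fderiv_fderiv_spatial_dir0 _ (hφsm γ), fderiv_fderiv_spatial_dirsucc _ (hφsm γ),
    spatial_radialExtension φ y, radialExtension_zero φ y,
    pi_single_zero_zero, pi_single_zero_succ, fderiv_fun_const, Pi.zero_apply,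
    ContinuousLinearMap.zero_apply,
    mul_zero, zero_mul, mul_one, one_mul, add_zero, zero_add, sub_zero,
    zero_sub, neg_zero, neg_mul, Finset.sum_const_zero]
  rw [Finset.mul_sum]
  refine Finset.sum_congr rfl fun i _ => ?_
  rw [Finset.mul_sum]
  refine Finset.sum_congr rfl fun j _ => ?_
  ring

end Main

/-- The tension field of the radial extension `φ̂ : CM → CN` of `φ : M → N`
satisfies `τ^γ(φ̂) = r⁻² τ^γ(φ)` and
`τ^0(φ̂) = (1/r) g^{ij}(g_{ij} − h_{αβ}∂_iφ^α∂_jφ^β)`.  Consequently, if φ is a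
Riemannian immersion, then φ̂ is harmonic (minimal) iff φ is. -/
theorem tension_radialExtension {m n : ℕ}
    (g ginv : (Fin m → ℝ) → Matrix (Fin m) (Fin m) ℝ)
    (h hinv : (Fin n → ℝ) → Matrix (Fin n) (Fin n) ℝ)
    (φ : (Fin m → ℝ) → (Fin n → ℝ))
    (hgsm : ∀ i j, ContDiff ℝ (⊤ : ℕ∞) (fun x => g x i j))
    (hhsm : ∀ α β, ContDiff ℝ (⊤ : ℕ∞) (fun x => h x α β))
    (hφsm : ∀ α, ContDiff ℝ (⊤ : ℕ∞) (fun x => φ x α))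
    (hgsym : ∀ x, (g x).IsSymm) (hhsym : ∀ x, (h x).IsSymm)
    (hginv : ∀ x, g x * ginv x = 1 ∧ ginv x * g x = 1)
    (hhinv : ∀ x, h x * hinv x = 1 ∧ hinv x * h x = 1) :
    (∀ y : Fin (m + 1) → ℝ, 0 < y 0 → ∀ γ : Fin n,
      tension (coneMetric g) (coneMetricInv ginv) (coneMetric h)
          (coneMetricInv hinv) (radialExtension φ) γ.succ y
        = (y 0) ^ (-2 : ℤ) *
            tension g ginv h hinv φ γ (spatial y)) ∧
    (∀ y : Fin (m + 1) → ℝ, 0 < y 0 →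
      tension (coneMetric g) (coneMetricInv ginv) (coneMetric h)
          (coneMetricInv hinv) (radialExtension φ) 0 y
        = (1 / y 0) * ∑ i : Fin m, ∑ j : Fin m, ginv (spatial y) i j *
            (g (spatial y) i j - ∑ α : Fin n, ∑ β : Fin n,
              h (φ (spatial y)) α β *
                fderiv ℝ (fun z => φ z α) (spatial y) (Pi.single i 1) *
                fderiv ℝ (fun z => φ z β) (spatial y) (Pi.single j 1))) ∧
    ((∀ x : Fin m → ℝ, ∀ i j : Fin m,
        (∑ α : Fin n, ∑ β : Fin n, h (φ x) α β *
          fderiv ℝ (fun z => φ z α) x (Pi.single i 1) *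
          fderiv ℝ (fun z => φ z β) x (Pi.single j 1)) = g x i j) →
      ((∀ y : Fin (m + 1) → ℝ, 0 < y 0 → ∀ a : Fin (n + 1),
          tension (coneMetric g) (coneMetricInv ginv) (coneMetric h)
            (coneMetricInv hinv) (radialExtension φ) a y = 0) ↔
        (∀ x : Fin m → ℝ, ∀ γ : Fin n, tension g ginv h hinv φ γ x = 0))) := by
  refine ⟨fun y hy γ => tension_re_succ g ginv h hinv φ hgsm hhsm hφsm hgsym
      hhsym hginv hhinv y hy γ,
    fun y hy => tension_re_zero g ginv h hinv φ hgsm hhsm hφsm hgsym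
      hhsym hginv hhinv y hy, fun himm => ⟨fun H x γ => ?_, fun K y hy a => ?_⟩⟩
  · have hy : (0:ℝ) < (Fin.cons 1 x : Fin (m+1) → ℝ) 0 := by
      rw [Fin.cons_zero]; norm_num
    have h1 := tension_re_succ g ginv h hinv φ hgsm hhsm hφsm hgsym hhsym
      hginv hhinv (Fin.cons 1 x) hy γ
    rw [H (Fin.cons 1 x) hy γ.succ] at h1
    have hsp : spatial (Fin.cons 1 x : Fin (m+1) → ℝ) = x := by
      funext i; simp [spatial]
    rw [hsp, Fin.cons_zero] at h1
    have : ((1:ℝ)) ^ (-2:ℤ) = 1 := one_zpow _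
    rw [this, one_mul] at h1
    exact h1.symm
  · refine Fin.cases ?_ (fun γ => ?_) a
    · rw [tension_re_zero g ginv h hinv φ hgsm hhsm hφsm hgsym hhsym
        hginv hhinv y hy]
      have : ∀ i j : Fin m, ginv (spatial y) i j *
          (g (spatial y) i j - ∑ α : Fin n, ∑ β : Fin n,
            h (φ (spatial y)) α β *
              fderiv ℝ (fun z => φ z α) (spatial y) (Pi.single i 1) *
              fderiv ℝ (fun z => φ z β) (spatial y) (Pi.single j 1)) = 0 := by
        intro i j
        rw [himm (spatial y) i j, sub_self, mul_zero]
      simp only [this, Finset.sum_const_zero, mul_zero]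
    · rw [tension_re_succ g ginv h hinv φ hgsm hhsm hφsm hgsym hhsym
        hginv hhinv y hy γ, K (spatial y) γ, mul_zero]
end
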